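/- Let M be a separable metrisable space, (Ω,F,P) a probability space, and λ : Ω → Y(0,T;M) a map into the Young measures on M such that ω ↦ λ(ω)(J) is measurable for every Borel J ⊆ M × [0,T], where M is a Radon space. Then there exists a measurable P(M)-valued process (q_t)_{t∈[0,T]} (i.e., (t,ω) ↦ q_t(ω,·) is measurable into probability measures on M) such that for P-a.e. ω, λ(ω)(C × D) = ∫_D q_t(ω, C) dt for all Borel C ⊆ M and D ⊆ [0,T]. -/

import Mathlib

open MeasureTheory
open scoped ENNReal ProbabilityTheory

lemma stmt19_aux_piSystem (X : Type*) [TopologicalSpace X]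
    [SecondCountableTopology X] [MeasurableSpace X] [BorelSpace X] :
    ∃ S : Set (Set X), S.Countable ∧ IsPiSystem S ∧ (∀ s ∈ S, MeasurableSet s) ∧
      MeasurableSpace.generateFrom S = ‹MeasurableSpace X› := by
  classical
  set B := TopologicalSpace.countableBasis X with hB
  have hopen : ∀ F : Set (Set X), F ⊆ B → F.Finite → IsOpen (⋂₀ F) := fun F hFB hFfin =>
    Set.Finite.isOpen_sInter hFfin
      (fun s hs => TopologicalSpace.isOpen_of_mem_countableBasis (hFB hs))
  refine ⟨Set.sInter '' {F : Set (Set X) | F ⊆ B ∧ F.Finite ∧ F.Nonempty}, ?_, ?_, ?_, ?_⟩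
  · refine Set.Countable.image (Set.Countable.mono ?_ (Set.countable_setOf_finite_subset
      (TopologicalSpace.countable_countableBasis X))) _
    exact fun F hF => ⟨hF.2.1, hF.1⟩
  · rintro _ ⟨F, ⟨hFB, hFfin, hFne⟩, rfl⟩ _ ⟨G, ⟨hGB, hGfin, hGne⟩, rfl⟩ -
    exact ⟨F ∪ G, ⟨Set.union_subset hFB hGB, hFfin.union hGfin,
      hFne.mono Set.subset_union_left⟩, Set.sInter_union F G⟩
  · rintro _ ⟨F, ⟨hFB, hFfin, hFne⟩, rfl⟩
    exact (hopen F hFB hFfin).measurableSet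
  · refine le_antisymm (MeasurableSpace.generateFrom_le ?_) ?_
    · rintro _ ⟨F, ⟨hFB, hFfin, hFne⟩, rfl⟩
      exact (hopen F hFB hFfin).measurableSet
    · rw [BorelSpace.measurable_eq (α := X),
        (TopologicalSpace.isBasis_countableBasis X).borel_eq_generateFrom]
      refine MeasurableSpace.generateFrom_le fun s hs => ?_
      exact MeasurableSpace.measurableSet_generateFrom
        ⟨{s}, ⟨by simpa using hs, Set.finite_singleton s, Set.singleton_nonempty s⟩, by simp⟩

/-- (Disintegration of random Young measures.)  Let `M` be a separable
metrisable Radon space (every finite Borel measure on `M` is inner regular), `(Ω,F,P)` a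
probability space, and `λ : Ω → Y(0,T;M)` a random Young measure: each `λ(ω)` is a finite
Borel measure on `M × [0,T]` whose time marginal is Lebesgue measure on `[0,T]`, and
`ω ↦ λ(ω)(J)` is measurable for every Borel `J`.  Then there is a measurable family of
probability measures `q_t(ω,·)` on `M` (a stochastic relaxed control) such that for
`P`-a.e. `ω`, `λ(ω)(C × D) = ∫_D q_t(ω,C) dt` for all Borel `C ⊆ M`, `D ⊆ [0,T]`. -/
theorem stmt19 {Ω M : Type*} [MeasurableSpace Ω]
    [MetricSpace M] [TopologicalSpace.SeparableSpace M]
    [MeasurableSpace M] [BorelSpace M]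
    (hRadon : ∀ μ : Measure M, IsFiniteMeasure μ → μ.InnerRegular)
    (P : Measure Ω) [IsProbabilityMeasure P]
    (T : ℝ) (hT : 0 < T)
    (lam : Ω → Measure (M × ℝ)) (hfin : ∀ ω, IsFiniteMeasure (lam ω))
    (hYoung : ∀ ω, ∀ D : Set ℝ, MeasurableSet D →
      lam ω (Set.univ ×ˢ D) = volume (D ∩ Set.Icc 0 T))
    (hmeas : ∀ J : Set (M × ℝ), MeasurableSet J → Measurable fun ω => lam ω J) :
    ∃ q : ℝ → Ω → Measure M,
      (∀ t ω, IsProbabilityMeasure (q t ω)) ∧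
      (∀ C : Set M, MeasurableSet C →
        Measurable fun p : ℝ × Ω => q p.1 p.2 C) ∧
      (∀ᵐ ω ∂P, ∀ C : Set M, MeasurableSet C →
        ∀ D : Set ℝ, MeasurableSet D → D ⊆ Set.Icc 0 T →
          lam ω (C ×ˢ D) = ∫⁻ t in D, q t ω C) := by
  classical
  haveI : SecondCountableTopology M := UniformSpace.secondCountable_of_separable M
  -- nonemptiness
  have hΩne : Nonempty Ω := by
    rcases isEmpty_or_nonempty Ω with h | h
    · exfalso
      have h1 : P Set.univ = 1 := measure_univ
      rw [Set.univ_eq_empty_iff.mpr h, measure_empty] at h1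
      exact zero_ne_one h1
    · exact h
  obtain ⟨ω₀⟩ := hΩne
  have hlamuniv : ∀ ω, lam ω Set.univ = ENNReal.ofReal T := by
    intro ω
    have h := hYoung ω Set.univ MeasurableSet.univ
    rw [Set.univ_prod_univ, Set.univ_inter, Real.volume_Icc] at h
    simpa using h
  have hMne : Nonempty M := by
    rcases isEmpty_or_nonempty M with h | h
    · exfalso
      have h1 := hlamuniv ω₀
      rw [Set.univ_eq_empty_iff.mpr (by infer_instance), measure_empty] at h1
      exact (ENNReal.ofReal_pos.mpr hT).ne' h1.symm
    · exact h
  haveI : Nonempty M := hMne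
  obtain ⟨m₀⟩ := hMne
  -- the embedding into ℝ^ℕ
  set u : ℕ → M := TopologicalSpace.denseSeq M with hu_def
  have hu : DenseRange u := TopologicalSpace.denseRange_denseSeq M
  set f : M → (ℕ → ℝ) := fun m n => dist m (u n) with hf_def
  have hf_cont : Continuous f := continuous_pi fun n => (continuous_id.dist continuous_const)
  have hf_inj : Function.Injective f := by
    intro a b hab
    have h : ∀ n, dist a (u n) = dist b (u n) := fun n => congrFun hab n
    by_contra hne
    have hd : 0 < dist a b := dist_pos.mpr hne
    obtain ⟨n, hn⟩ := hu.exists_dist_lt a (by positivity : (0:ℝ) < dist a b / 3)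
    have : dist a b ≤ dist a (u n) + dist b (u n) := by
      calc dist a b ≤ dist a (u n) + dist (u n) b := dist_triangle _ _ _
        _ = dist a (u n) + dist b (u n) := by rw [dist_comm (u n) b]
    rw [← h n] at this
    linarith
  have hf_meas : Measurable f := hf_cont.measurable
  -- the kernel of the random Young measures and the big measure on (ℝ × Ω) × (ℕ → ℝ)
  have hLmeas : Measurable lam := Measure.measurable_of_measurable_coe _ hmeas
  set L : ProbabilityTheory.Kernel Ω (M × ℝ) := ⟨lam, hLmeas⟩ with hL_def
  have hLapp : ∀ ω, L ω = lam ω := fun ω => rfl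
  haveI : ProbabilityTheory.IsFiniteKernel L :=
    ⟨⟨ENNReal.ofReal T, ENNReal.ofReal_lt_top, fun ω => le_of_eq (hlamuniv ω)⟩⟩
  set μ₀ : Measure (Ω × (M × ℝ)) := P ⊗ₘ L with hμ₀_def
  set φ : Ω × (M × ℝ) → (ℝ × Ω) × (ℕ → ℝ) :=
    fun p => ((p.2.2, p.1), f p.2.1) with hφ_def
  have hφ : Measurable φ :=
    (measurable_snd.snd.prodMk measurable_fst).prodMk (hf_meas.comp measurable_snd.fst)
  set ρ : Measure ((ℝ × Ω) × (ℕ → ℝ)) := μ₀.map φ with hρ_def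
  have hρ_rect : ∀ (D' : Set ℝ) (F : Set Ω) (C' : Set (ℕ → ℝ)),
      MeasurableSet D' → MeasurableSet F → MeasurableSet C' →
      ρ ((D' ×ˢ F) ×ˢ C') = ∫⁻ ω in F, lam ω ((f ⁻¹' C') ×ˢ D') ∂P := by
    intro D' F C' hD' hF hC'
    rw [hρ_def, Measure.map_apply hφ ((hD'.prod hF).prod hC')]
    have hpre : φ ⁻¹' ((D' ×ˢ F) ×ˢ C') = F ×ˢ ((f ⁻¹' C') ×ˢ D') := by
      ext p
      simp only [hφ_def, Set.mem_preimage, Set.mem_prod]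
      tauto
    rw [hpre, hμ₀_def, Measure.compProd_apply_prod hF ((hf_meas hC').prod hD')]
    rfl
  haveI : IsFiniteMeasure ρ := by
    constructor
    rw [hρ_def, Measure.map_apply hφ MeasurableSet.univ, Set.preimage_univ]
    exact measure_lt_top _ _
  have hfst : ρ.fst = (volume.restrict (Set.Icc 0 T)).prod P := by
    refine (Measure.prod_eq ?_).symm
    intro D' F hD' hF
    rw [Measure.fst_apply (hD'.prod hF)]
    have hpre : (Prod.fst ⁻¹' (D' ×ˢ F) : Set ((ℝ × Ω) × (ℕ → ℝ)))
        = (D' ×ˢ F) ×ˢ (Set.univ : Set (ℕ → ℝ)) := by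
      ext p; simp [Set.mem_prod]
    rw [hpre, hρ_rect D' F _ hD' hF MeasurableSet.univ]
    simp only [Set.preimage_univ]
    calc ∫⁻ ω in F, lam ω ((Set.univ : Set M) ×ˢ D') ∂P
        = ∫⁻ _ω in F, volume (D' ∩ Set.Icc 0 T) ∂P := by
          refine setLIntegral_congr_fun hF ?_
          exact fun ω _ => hYoung ω D' hD'
      _ = volume (D' ∩ Set.Icc 0 T) * P F := by rw [setLIntegral_const]
      _ = volume.restrict (Set.Icc 0 T) D' * P F := by rw [Measure.restrict_apply hD']
  -- disintegration
  set κ := ρ.condKernel with hκ_def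
  have hdis : ρ.fst ⊗ₘ κ = ρ := ρ.disintegrate ρ.condKernel
  have hκ_rect : ∀ (D' : Set ℝ) (C' : Set (ℕ → ℝ)) (F : Set Ω),
      MeasurableSet D' → MeasurableSet C' → MeasurableSet F →
      ∫⁻ ω in F, (∫⁻ t in D', κ (t, ω) C' ∂(volume.restrict (Set.Icc 0 T))) ∂P
        = ∫⁻ ω in F, lam ω ((f ⁻¹' C') ×ˢ D') ∂P := by
    intro D' C' F hD' hC' hF
    have h1 : (ρ.fst ⊗ₘ κ) ((D' ×ˢ F) ×ˢ C') = ρ ((D' ×ˢ F) ×ˢ C') := by rw [hdis]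
    rw [Measure.compProd_apply_prod (hD'.prod hF) hC', hfst,
      hρ_rect D' F C' hD' hF hC'] at h1
    rw [← h1]
    rw [← Measure.prod_restrict, lintegral_prod_symm]
    exact (ProbabilityTheory.Kernel.measurable_coe κ hC').aemeasurable
  have hae_pair : ∀ (C' : Set (ℕ → ℝ)) (D' : Set ℝ), MeasurableSet C' → MeasurableSet D' →
      ∀ᵐ ω ∂P, (∫⁻ t in D', κ (t, ω) C' ∂(volume.restrict (Set.Icc 0 T)))
        = lam ω ((f ⁻¹' C') ×ˢ D') := by
    intro C' D' hC' hD'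
    have hmeasint : Measurable fun ω =>
        ∫⁻ t in D', κ (t, ω) C' ∂(volume.restrict (Set.Icc 0 T)) := by
      have h : Measurable fun p : Ω × ℝ =>
          ((Set.univ : Set Ω) ×ˢ D').indicator (fun p : Ω × ℝ => κ (p.2, p.1) C') p :=
        ((ProbabilityTheory.Kernel.measurable_coe κ hC').comp measurable_swap).indicator
          (MeasurableSet.univ.prod hD')
      have h2 := h.lintegral_prod_right' (ν := volume.restrict (Set.Icc 0 T))
      have heq : ∀ ω, (∫⁻ t, ((Set.univ : Set Ω) ×ˢ D').indicator
          (fun p : Ω × ℝ => κ (p.2, p.1) C') (ω, t) ∂(volume.restrict (Set.Icc 0 T)))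
          = ∫⁻ t in D', κ (t, ω) C' ∂(volume.restrict (Set.Icc 0 T)) := by
        intro ω
        rw [← lintegral_indicator hD']
        congr 1
        ext t
        by_cases ht : t ∈ D' <;> simp [Set.indicator, ht]
      simpa only [heq] using h2
    refine ae_eq_of_forall_setLIntegral_eq_of_sigmaFinite hmeasint
      (hmeas _ ((hf_meas hC').prod hD')) ?_
    intro F hF _
    exact hκ_rect D' C' F hD' hC' hF
  -- the M-marginal and a σ-compact carrier
  set ν : Measure M := μ₀.map (fun p : Ω × (M × ℝ) => p.2.1) with hν_def
  have hν : ∀ A : Set M, MeasurableSet A → ν A = ∫⁻ ω, lam ω (A ×ˢ (Set.univ : Set ℝ)) ∂P := by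
    intro A hA
    rw [hν_def, Measure.map_apply measurable_snd.fst hA]
    have hpre : (fun p : Ω × (M × ℝ) => p.2.1) ⁻¹' A
        = (Set.univ : Set Ω) ×ˢ (A ×ˢ (Set.univ : Set ℝ)) := by
      ext p; simp [Set.mem_prod]
    rw [hpre, hμ₀_def, Measure.compProd_apply_prod MeasurableSet.univ (hA.prod MeasurableSet.univ),
      Measure.restrict_univ]
    rfl
  haveI : IsFiniteMeasure ν := by
    constructor
    rw [hν_def, Measure.map_apply measurable_snd.fst MeasurableSet.univ, Set.preimage_univ]
    exact measure_lt_top _ _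
  have hνuniv : ν Set.univ = ENNReal.ofReal T := by
    rw [hν _ MeasurableSet.univ]
    simp only [Set.univ_prod_univ]
    rw [lintegral_congr hlamuniv, lintegral_const, measure_univ, mul_one]
  have hKex : ∀ n : ℕ, ∃ K : Set M, K ⊆ Set.univ ∧ IsCompact K ∧
      ν Set.univ - ((n : ℝ≥0∞) + 1)⁻¹ < ν K := by
    intro n
    refine (hRadon ν inferInstance).innerRegular MeasurableSet.univ _ ?_
    refine ENNReal.sub_lt_self ?_ ?_ ?_
    · rw [hνuniv]; exact ENNReal.ofReal_lt_top.ne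
    · rw [hνuniv]; exact (ENNReal.ofReal_pos.mpr hT).ne'
    · simp
  choose K hKsub hKcomp hKlt using hKex
  set U : Set M := ⋃ n, K n with hU_def
  have hUmeas : MeasurableSet U :=
    MeasurableSet.iUnion fun n => (hKcomp n).isClosed.measurableSet
  have hUc : ν Uᶜ = 0 := by
    have hle : ∀ n : ℕ, ν Uᶜ ≤ ((n : ℝ≥0∞) + 1)⁻¹ := by
      intro n
      have h1 : ν Set.univ ≤ ν U + ((n : ℝ≥0∞) + 1)⁻¹ := by
        calc ν Set.univ ≤ ν (K n) + ((n : ℝ≥0∞) + 1)⁻¹ := tsub_le_iff_right.mp (hKlt n).le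
          _ ≤ ν U + ((n : ℝ≥0∞) + 1)⁻¹ :=
            add_le_add (measure_mono (Set.subset_iUnion K n)) le_rfl
      have h2 : ν U + ν Uᶜ = ν Set.univ := measure_add_measure_compl hUmeas
      rw [← h2] at h1
      exact (ENNReal.add_le_add_iff_left (measure_ne_top ν U)).mp h1
    by_contra h0
    obtain ⟨n, hn⟩ := ENNReal.exists_inv_nat_lt h0
    have : ((n : ℝ≥0∞) + 1)⁻¹ ≤ ((n : ℝ≥0∞))⁻¹ :=
      ENNReal.inv_le_inv' (le_add_right le_rfl)
    exact absurd ((hle n).trans this) (not_le.mpr hn)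
  -- measurable images under f
  have hfU_meas : ∀ C : Set M, MeasurableSet C → MeasurableSet (f '' (C ∩ U)) := by
    intro C hC
    have himg : f '' (C ∩ U) = ⋃ n, f '' (C ∩ K n) := by
      rw [hU_def, Set.inter_iUnion, Set.image_iUnion]
    rw [himg]
    refine MeasurableSet.iUnion fun n => ?_
    haveI : CompactSpace (K n) := isCompact_iff_compactSpace.mp (hKcomp n)
    haveI : PolishSpace (K n) := inferInstance
    have heq : f '' (C ∩ K n)
        = (fun x : K n => f (x : M)) '' ((fun x : K n => (x : M)) ⁻¹' C) := by
      rw [show (fun x : K n => f (x : M)) = f ∘ (fun x : K n => (x : M)) from rfl,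
        Set.image_comp, Subtype.image_preimage_coe, Set.inter_comm]
    rw [heq]
    exact MeasurableSet.image_of_continuousOn_injOn (measurable_subtype_coe hC)
      ((hf_cont.comp continuous_subtype_val).continuousOn)
      ((hf_inj.comp Subtype.val_injective).injOn)
  set S' : Set (ℕ → ℝ) := f '' U with hS'_def
  have hS' : MeasurableSet S' := by
    have : S' = f '' ((Set.univ : Set M) ∩ U) := by rw [Set.univ_inter]
    rw [this]; exact hfU_meas _ MeasurableSet.univ
  -- measurable partial inverse of f
  set g : (ℕ → ℝ) → M := fun x => if h : x ∈ f '' U then h.choose else m₀ with hg_def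
  have hgf : ∀ m ∈ U, g (f m) = m := by
    intro m hm
    have h : f m ∈ f '' U := Set.mem_image_of_mem f hm
    rw [hg_def]
    simp only [dif_pos h]
    exact hf_inj h.choose_spec.2
  have hgpre : ∀ C : Set M, g ⁻¹' C
      = f '' (C ∩ U) ∪ ((f '' U)ᶜ ∩ (if m₀ ∈ C then Set.univ else ∅)) := by
    intro C
    ext x
    by_cases hx : x ∈ f '' U
    · obtain ⟨m, hmU, rfl⟩ := hx
      have hgm : g (f m) = m := hgf m hmU
      simp only [Set.mem_preimage, hgm, Set.mem_union, Set.mem_inter_iff, Set.mem_compl_iff]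
      constructor
      · intro hmC
        exact Or.inl ⟨m, ⟨hmC, hmU⟩, rfl⟩
      · rintro (⟨m', ⟨hm'C, hm'U⟩, hm'⟩ | ⟨hnot, _⟩)
        · rwa [← hf_inj hm']
        · exact absurd (Set.mem_image_of_mem f hmU) hnot
    · have hgx : g x = m₀ := by rw [hg_def]; simp only [dif_neg hx]
      simp only [Set.mem_preimage, hgx, Set.mem_union, Set.mem_inter_iff, Set.mem_compl_iff]
      constructor
      · intro hm₀C
        refine Or.inr ⟨hx, by simp [hm₀C]⟩
      · rintro (⟨m', ⟨hm'C, hm'U⟩, hm'⟩ | ⟨-, hcond⟩)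
        · exact absurd ⟨m', hm'U, hm'⟩ hx
        · by_cases h0 : m₀ ∈ C
          · exact h0
          · simp [h0] at hcond
  have hg_meas : Measurable g := by
    intro C hC
    rw [hgpre C]
    refine MeasurableSet.union (hfU_meas C hC) ?_
    refine MeasurableSet.inter ?_ (by split_ifs <;> simp)
    have : (f '' U) = f '' ((Set.univ : Set M) ∩ U) := by rw [Set.univ_inter]
    rw [this]
    exact (hfU_meas _ MeasurableSet.univ).compl
  -- definition of q
  haveI : ProbabilityTheory.IsMarkovKernel κ := by
    rw [hκ_def]; infer_instance
  set q : ℝ → Ω → Measure M := fun t ω =>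
    if κ (t, ω) S' = 1 then (κ (t, ω)).map g else Measure.dirac m₀ with hq_def
  refine ⟨q, ?_, ?_, ?_⟩
  · intro t ω
    rw [hq_def]
    dsimp only
    split_ifs with h
    · haveI : IsProbabilityMeasure (κ (t, ω)) :=
        ProbabilityTheory.IsMarkovKernel.isProbabilityMeasure _
      exact Measure.isProbabilityMeasure_map hg_meas.aemeasurable
    · infer_instance
  · intro C hC
    have heq : (fun p : ℝ × Ω => q p.1 p.2 C)
        = fun p : ℝ × Ω => if κ p S' = 1 then κ p (g ⁻¹' C) else (Measure.dirac m₀) C := by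
      funext p
      rw [hq_def]
      dsimp only
      by_cases h : κ (p.1, p.2) S' = 1
      · rw [if_pos h, if_pos h, Measure.map_apply hg_meas hC]
      · rw [if_neg h, if_neg h]
    rw [heq]
    refine Measurable.ite ?_ (ProbabilityTheory.Kernel.measurable_coe κ (hg_meas hC)) measurable_const
    exact (ProbabilityTheory.Kernel.measurable_coe κ hS') (measurableSet_singleton 1)
  -- the a.e. disintegration identity
  obtain ⟨SH, hSHc, hSHpi, hSHm, hSHgen⟩ := stmt19_aux_piSystem (ℕ → ℝ)
  set SR : Set (Set ℝ) := ⋃ a : ℚ, {Set.Iio (a : ℝ)} with hSR_def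
  have hSRc : SR.Countable := Set.countable_iUnion fun a => Set.countable_singleton _
  have hSRpi : IsPiSystem SR := Real.isPiSystem_Iio_rat
  have hSRm : ∀ s ∈ SR, MeasurableSet s := by
    intro s hs
    simp only [hSR_def, Set.mem_iUnion, Set.mem_singleton_iff] at hs
    obtain ⟨a, rfl⟩ := hs
    exact measurableSet_Iio
  set SR' := insert (Set.univ : Set ℝ) SR with hSR'_def
  set SH' := insert (Set.univ : Set (ℕ → ℝ)) SH with hSH'_def
  have hSR'c : SR'.Countable := hSRc.insert _
  have hSH'c : SH'.Countable := hSHc.insert _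
  have hSR'm : ∀ s ∈ SR', MeasurableSet s := by
    rintro s (rfl | hs)
    exacts [MeasurableSet.univ, hSRm s hs]
  have hSH'm : ∀ s ∈ SH', MeasurableSet s := by
    rintro s (rfl | hs)
    exacts [MeasurableSet.univ, hSHm s hs]
  have hGood1 : ∀ᵐ ω ∂P, ∀ C' ∈ SH', ∀ D' ∈ SR',
      (∫⁻ t in D', κ (t, ω) C' ∂(volume.restrict (Set.Icc 0 T)))
        = lam ω ((f ⁻¹' C') ×ˢ D') := by
    rw [ae_ball_iff hSH'c]
    intro C' hC'
    rw [ae_ball_iff hSR'c]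
    intro D' hD'
    exact hae_pair C' D' (hSH'm C' hC') (hSR'm D' hD')
  have hGood2 : ∀ᵐ ω ∂P, lam ω (Uᶜ ×ˢ (Set.univ : Set ℝ)) = 0 := by
    have h0 : ∫⁻ ω, lam ω (Uᶜ ×ˢ (Set.univ : Set ℝ)) ∂P = 0 := by
      rw [← hν _ hUmeas.compl]
      exact hUc
    exact (lintegral_eq_zero_iff (hmeas _ (hUmeas.compl.prod MeasurableSet.univ))).mp h0
  have hGood3 : ∀ᵐ ω ∂P, ∀ᵐ t ∂(volume.restrict (Set.Icc 0 T)), κ (t, ω) S'ᶜ = 0 := by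
    have hint0 : ∫⁻ p, κ p S'ᶜ ∂ρ.fst = 0 := by
      have h1 : (ρ.fst ⊗ₘ κ) ((Set.univ : Set (ℝ × Ω)) ×ˢ S'ᶜ) = ρ (Set.univ ×ˢ S'ᶜ) := by
        rw [hdis]
      rw [Measure.compProd_apply_prod MeasurableSet.univ hS'.compl, Measure.restrict_univ] at h1
      rw [h1]
      have huniv : (Set.univ : Set (ℝ × Ω)) = (Set.univ : Set ℝ) ×ˢ (Set.univ : Set Ω) :=
        (Set.univ_prod_univ).symm
      rw [huniv, hρ_rect _ _ _ MeasurableSet.univ MeasurableSet.univ hS'.compl]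
      refine le_antisymm ?_ zero_le
      calc ∫⁻ ω in Set.univ, lam ω ((f ⁻¹' S'ᶜ) ×ˢ (Set.univ : Set ℝ)) ∂P
          ≤ ∫⁻ ω in Set.univ, lam ω (Uᶜ ×ˢ (Set.univ : Set ℝ)) ∂P := by
            refine lintegral_mono fun ω => measure_mono (Set.prod_mono ?_ le_rfl)
            intro m hm hmU
            exact hm (Set.mem_image_of_mem f hmU)
        _ = ν Uᶜ := by rw [Measure.restrict_univ, ← hν _ hUmeas.compl]
        _ = 0 := hUc
    have h3 : ∀ᵐ p ∂ρ.fst, κ p S'ᶜ = 0 :=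
      (lintegral_eq_zero_iff (ProbabilityTheory.Kernel.measurable_coe κ hS'.compl)).mp hint0
    rw [hfst] at h3
    have hmeasset : MeasurableSet {z : Ω × ℝ | κ (z.2, z.1) S'ᶜ = 0} :=
      ((ProbabilityTheory.Kernel.measurable_coe κ hS'.compl).comp measurable_swap)
        (measurableSet_singleton 0)
    have h3' : ∀ᵐ z ∂(P.prod (volume.restrict (Set.Icc 0 T))), κ (z.2, z.1) S'ᶜ = 0 := by
      rw [← Measure.prod_swap, MeasureTheory.ae_map_iff measurable_swap.aemeasurable hmeasset]
      exact h3
    exact Measure.ae_ae_of_ae_prod h3'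
  filter_upwards [hGood1, hGood2, hGood3] with ω hω1 hω2 hω3
  intro C hC D hD hDsub
  haveI := hfin ω
  set κω : ProbabilityTheory.Kernel ℝ (ℕ → ℝ) :=
    κ.comap (fun t => (t, ω)) (measurable_id.prodMk measurable_const) with hκω_def
  have hκωapp : ∀ t, κω t = κ (t, ω) := fun t =>
    ProbabilityTheory.Kernel.comap_apply κ _ _
  haveI : ProbabilityTheory.IsMarkovKernel κω := by
    constructor
    intro t
    rw [hκωapp t]
    exact ProbabilityTheory.IsMarkovKernel.isProbabilityMeasure _
  set σ₁ : Measure (ℝ × (ℕ → ℝ)) := (lam ω).map (fun p : M × ℝ => (p.2, f p.1)) with hσ₁_def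
  set σ₂ : Measure (ℝ × (ℕ → ℝ)) := (volume.restrict (Set.Icc 0 T)) ⊗ₘ κω with hσ₂_def
  have hσmap : Measurable fun p : M × ℝ => (p.2, f p.1) :=
    measurable_snd.prodMk (hf_meas.comp measurable_fst)
  haveI : IsFiniteMeasure σ₁ := by
    constructor
    rw [hσ₁_def, Measure.map_apply hσmap MeasurableSet.univ, Set.preimage_univ]
    exact measure_lt_top _ _
  have hσ₁_rect : ∀ (D' : Set ℝ) (C' : Set (ℕ → ℝ)), MeasurableSet D' → MeasurableSet C' →
      σ₁ (D' ×ˢ C') = lam ω ((f ⁻¹' C') ×ˢ D') := by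
    intro D' C' hD' hC'
    rw [hσ₁_def, Measure.map_apply hσmap (hD'.prod hC')]
    congr 1
    ext p
    simp only [Set.mem_preimage, Set.mem_prod]
    tauto
  have hσ₂_rect : ∀ (D' : Set ℝ) (C' : Set (ℕ → ℝ)), MeasurableSet D' → MeasurableSet C' →
      σ₂ (D' ×ˢ C') = ∫⁻ t in D', κ (t, ω) C' ∂(volume.restrict (Set.Icc 0 T)) := by
    intro D' C' hD' hC'
    rw [hσ₂_def, Measure.compProd_apply_prod hD' hC']
    exact setLIntegral_congr_fun hD' (fun t _ => by rw [hκωapp t])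
  have hσ : σ₁ = σ₂ := by
    have hRinst : (inferInstance : MeasurableSpace ℝ) = MeasurableSpace.generateFrom SR' := by
      rw [hSR'_def, MeasurableSpace.generateFrom_insert_univ, ← Real.borel_eq_generateFrom_Iio_rat]
      exact BorelSpace.measurable_eq (α := ℝ)
    have hHinst : (inferInstance : MeasurableSpace (ℕ → ℝ))
        = MeasurableSpace.generateFrom SH' := by
      rw [hSH'_def, MeasurableSpace.generateFrom_insert_univ, hSHgen]
    have hspanR : IsCountablySpanning SR' :=
      ⟨fun _ => Set.univ, fun _ => Set.mem_insert _ _, Set.iUnion_const _⟩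
    have hspanH : IsCountablySpanning SH' :=
      ⟨fun _ => Set.univ, fun _ => Set.mem_insert _ _, Set.iUnion_const _⟩
    have hgen := generateFrom_prod_eq hspanR hspanH
    rw [← hRinst, ← hHinst] at hgen
    refine ext_of_generate_finite _ hgen (hSRpi.insert_univ.prod hSHpi.insert_univ) ?_ ?_
    · rintro s ⟨D', hD', C', hC', rfl⟩
      rw [hσ₁_rect D' C' (hSR'm D' hD') (hSH'm C' hC'),
        hσ₂_rect D' C' (hSR'm D' hD') (hSH'm C' hC')]
      exact (hω1 C' hC' D' hD').symm
    · have h1 : σ₁ Set.univ = ENNReal.ofReal T := by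
        rw [← Set.univ_prod_univ, hσ₁_rect _ _ MeasurableSet.univ MeasurableSet.univ]
        rw [Set.preimage_univ, Set.univ_prod_univ]
        exact hlamuniv ω
      have h2 : σ₂ Set.univ = ENNReal.ofReal T := by
        rw [← Set.univ_prod_univ, hσ₂_rect _ _ MeasurableSet.univ MeasurableSet.univ]
        rw [Measure.restrict_univ]
        have hone : ∀ t : ℝ, κ (t, ω) Set.univ = 1 := by
          intro t
          haveI : IsProbabilityMeasure (κ (t, ω)) :=
            ProbabilityTheory.IsMarkovKernel.isProbabilityMeasure _
          exact measure_univ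
        rw [lintegral_congr hone, lintegral_one, Measure.restrict_apply_univ, Real.volume_Icc]
        simp
      rw [h1, h2]
  set E : Set (ℕ → ℝ) := f '' (C ∩ U) with hE_def
  have hE : MeasurableSet E := hfU_meas C hC
  have hstep1 : lam ω (C ×ˢ D) = lam ω ((C ∩ U) ×ˢ D) := by
    refine le_antisymm ?_ (measure_mono (Set.prod_mono Set.inter_subset_left le_rfl))
    have hsub : C ×ˢ D ⊆ ((C ∩ U) ×ˢ D) ∪ (Uᶜ ×ˢ (Set.univ : Set ℝ)) := by
      rintro ⟨m, t⟩ ⟨hmC, htD⟩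
      by_cases hmU : m ∈ U
      · exact Or.inl ⟨⟨hmC, hmU⟩, htD⟩
      · exact Or.inr ⟨hmU, trivial⟩
    calc lam ω (C ×ˢ D) ≤ lam ω (((C ∩ U) ×ˢ D) ∪ (Uᶜ ×ˢ Set.univ)) := measure_mono hsub
      _ ≤ lam ω ((C ∩ U) ×ˢ D) + lam ω (Uᶜ ×ˢ Set.univ) := measure_union_le _ _
      _ = lam ω ((C ∩ U) ×ˢ D) := by rw [hω2, add_zero]
  have hstep2 : lam ω ((C ∩ U) ×ˢ D) = σ₁ (D ×ˢ E) := by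
    rw [hσ₁_rect D E hD hE, hE_def, Set.preimage_image_eq _ hf_inj]
  have hstep4 : ∫⁻ t in D, κ (t, ω) E ∂(volume.restrict (Set.Icc 0 T))
      = ∫⁻ t in D, q t ω C ∂(volume.restrict (Set.Icc 0 T)) := by
    refine lintegral_congr_ae ?_
    have hres : ∀ᵐ t ∂((volume.restrict (Set.Icc 0 T)).restrict D), κ (t, ω) S'ᶜ = 0 :=
      ae_restrict_of_ae hω3
    filter_upwards [hres] with t ht
    haveI : IsProbabilityMeasure (κ (t, ω)) :=
      ProbabilityTheory.IsMarkovKernel.isProbabilityMeasure _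
    have hS1 : κ (t, ω) S' = 1 := by
      have h := measure_compl (μ := κ (t, ω)) hS' (measure_ne_top _ _)
      rw [ht, measure_univ] at h
      exact le_antisymm prob_le_one (tsub_eq_zero_iff_le.mp h.symm)
    rw [hq_def]
    dsimp only
    rw [if_pos hS1, Measure.map_apply hg_meas hC]
    have hsplit : ∀ A : Set (ℕ → ℝ), κ (t, ω) A = κ (t, ω) (A ∩ S') := by
      intro A
      have h := measure_inter_add_diff A hS' (μ := κ (t, ω))
      have hdiff : κ (t, ω) (A \ S') = 0 :=
        le_antisymm (le_trans (measure_mono (fun x hx => hx.2)) ht.le) zero_le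
      rw [hdiff, add_zero] at h
      exact h.symm
    have hgES : (g ⁻¹' C) ∩ S' = E ∩ S' := by
      ext x
      constructor
      · rintro ⟨hxC, hxS⟩
        obtain ⟨m, hmU, rfl⟩ := hxS
        have hgm : g (f m) = m := hgf m hmU
        rw [Set.mem_preimage, hgm] at hxC
        exact ⟨⟨m, ⟨hxC, hmU⟩, rfl⟩, ⟨m, hmU, rfl⟩⟩
      · rintro ⟨⟨m, ⟨hmC, hmU⟩, rfl⟩, hxS⟩
        refine ⟨?_, hxS⟩
        rw [Set.mem_preimage, hgf m hmU]
        exact hmC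
    rw [hsplit E, hsplit (g ⁻¹' C), hgES]
  have hstep5 : ∫⁻ t in D, q t ω C ∂(volume.restrict (Set.Icc 0 T)) = ∫⁻ t in D, q t ω C := by
    rw [Measure.restrict_restrict hD, Set.inter_eq_self_of_subset_left hDsub]
  rw [hstep1, hstep2, hσ, hσ₂_rect D E hD hE, hstep4, hstep5]
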